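/- arXiv:2307.06851 — 2 statements merged into one kernel-verified Lean document; each statement's English description precedes it below -/
import Mathlib

section
/- Let s and s' be simulators in a target–context category and let (r*,q*) : s → s' be a simulator morphism. Then r* is a lax reduction of type s → s', i.e. s∘(r⊗id_{C₀}) ⪰ s'. Consequently, if s' is a universal simulator then s is a universal simulator (simulator morphisms cannot generate universality). -/
open CategoryTheory MonoidalCategory

universe w v u v' u'

/-- A gs-monoidal category: a symmetric monoidal category in which every object carries a
commutative comonoid structure (copy and discard), compatible with tensor products. -/
class GSCat (C : Type u) [Category.{v} C] [MonoidalCategory C] [SymmetricCategory C] where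
  copy : ∀ A : C, A ⟶ A ⊗ A
  discard : ∀ A : C, A ⟶ 𝟙_ C
  copy_assoc : ∀ A : C, copy A ≫ (copy A ▷ A) ≫ (α_ A A A).hom = copy A ≫ (A ◁ copy A)
  copy_comm : ∀ A : C, copy A ≫ (β_ A A).hom = copy A
  copy_counit_left : ∀ A : C, copy A ≫ (discard A ▷ A) ≫ (λ_ A).hom = 𝟙 A
  copy_counit_right : ∀ A : C, copy A ≫ (A ◁ discard A) ≫ (ρ_ A).hom = 𝟙 A
  copy_tensor : ∀ A X : C, copy (A ⊗ X) = (copy A ⊗ₘ copy X) ≫ tensorμ A A X X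
  discard_tensor : ∀ A X : C, discard (A ⊗ X) = (discard A ⊗ₘ discard X) ≫ (λ_ (𝟙_ C)).hom
  discard_unit : discard (𝟙_ C) = 𝟙 (𝟙_ C)

variable {C : Type u} [Category.{v} C] [MonoidalCategory C] [SymmetricCategory C] [GSCat C]

/-- The domain `dom(f) = ρ_A ∘ (id_A ⊗ (ε_X ∘ f)) ∘ Δ_A` of a morphism `f : A ⟶ X`. -/
def gsDom {A X : C} (f : A ⟶ X) : A ⟶ A :=
  GSCat.copy A ≫ (A ◁ (f ≫ GSCat.discard X)) ≫ (ρ_ A).hom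

/-- A morphism is normalized if `f ∘ dom(f) = f`. -/
def GsNormalized {A X : C} (f : A ⟶ X) : Prop := gsDom f ≫ f = f

/-- A morphism is functional if `Δ_X ∘ f = (f ⊗ f) ∘ Δ_A`. -/
def GsFunctional {A X : C} (f : A ⟶ X) : Prop :=
  f ≫ GSCat.copy X = GSCat.copy A ≫ (f ⊗ₘ f)

/-- A morphism is total if `ε_X ∘ f = ε_A`. -/
def GsTotal {A X : C} (f : A ⟶ X) : Prop := f ≫ GSCat.discard X = GSCat.discard A

/-- `f ⊒ g` : `f` agrees with `g` on the domain of `g`, i.e. `f ∘ dom(g) = g`. -/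
def GsRestrict {A X : C} (f g : A ⟶ X) : Prop := gsDom g ≫ f = g

/-- A gs-monoidal category is normalized if all of its morphisms are normalized. -/
class GsNormalizedCat (C : Type u) [Category.{v} C] [MonoidalCategory C]
    [SymmetricCategory C] [GSCat C] : Prop where
  norm : ∀ {A X : C} (f : A ⟶ X), GsNormalized f

/-- A target--context category: a (normalized) gs-monoidal category with distinguished
objects `T` (targets) and `C0` (contexts) together with an ambient preorder on each
hom-set into `T ⊗ C0`, containing the restriction order and preserved by precomposition. -/
structure TCC (C : Type u) [Category.{v} C] [MonoidalCategory C] [SymmetricCategory C]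
    [GSCat C] (T C0 : C) where
  amb : ∀ {A : C}, (A ⟶ T ⊗ C0) → (A ⟶ T ⊗ C0) → Prop
  amb_refl : ∀ {A : C} (f : A ⟶ T ⊗ C0), amb f f
  amb_trans : ∀ {A : C} {f g h : A ⟶ T ⊗ C0}, amb f g → amb g h → amb f h
  amb_of_restrict : ∀ {A : C} {f g : A ⟶ T ⊗ C0}, GsRestrict f g → amb f g
  amb_precomp : ∀ {A Z : C} {f g : A ⟶ T ⊗ C0} (h : Z ⟶ A), amb f g → amb (h ≫ f) (h ≫ g)

/-- A simulator: a morphism `s : P ⊗ C0 ⟶ T ⊗ C0` of the form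
`s = (s_T ⊗ s_C) ∘ (Δ_P ⊗ id)` with functional compiler `s_T : P ⟶ T` and
context reduction `s_C : P ⊗ C0 ⟶ C0`. -/
structure Simulator {C : Type u} [Category.{v} C] [MonoidalCategory C] [SymmetricCategory C]
    [GSCat C] (T C0 P : C) where
  s : P ⊗ C0 ⟶ T ⊗ C0
  sT : P ⟶ T
  sC : P ⊗ C0 ⟶ C0
  sT_functional : GsFunctional sT
  split : s = (GSCat.copy P ▷ C0) ≫ (α_ P P C0).hom ≫ (sT ⊗ₘ sC)

/-- A simulator is universal if there is a lax reduction to the trivial simulator: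
a functional `r : T ⟶ P` with `s ∘ (r ⊗ id) ⪰ id`. -/
def IsUniversal {T C0 : C} (𝒯 : TCC C T C0) {P : C} (s : Simulator T C0 P) : Prop :=
  ∃ r : T ⟶ P, GsFunctional r ∧ 𝒯.amb ((r ▷ C0) ≫ s.s) (𝟙 (T ⊗ C0))

/-- A processing with programs `P`: a morphism `q : P ⊗ (T ⊗ C0) ⟶ T ⊗ C0` that splits as a
simulator with programs `P ⊗ T` and is behaviorally dominated by discarding `P`. -/
structure Processing {T C0 : C} (𝒯 : TCC C T C0) (P : C) where
  q : P ⊗ (T ⊗ C0) ⟶ T ⊗ C0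
  qT : P ⊗ T ⟶ T
  qC : (P ⊗ T) ⊗ C0 ⟶ C0
  qT_functional : GsFunctional qT
  split : q = (α_ P T C0).inv ≫ (GSCat.copy (P ⊗ T) ▷ C0) ≫
      (α_ (P ⊗ T) (P ⊗ T) C0).hom ≫ (qT ⊗ₘ qC)
  weak : 𝒯.amb ((GSCat.discard P ▷ (T ⊗ C0)) ≫ (λ_ (T ⊗ C0)).hom) q

/-- A simulator morphism `s → s'` : a reduction `r : P' ⟶ P` (giving the pulled-back
simulator `r*s := s ∘ (r ⊗ id)`) together with a processing `q` mapping `r*s` to `s'`,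
i.e. `s' = q ∘ (id ⊗ r*s) ∘ (Δ ⊗ id)`. -/
structure SimMor {T C0 : C} (𝒯 : TCC C T C0) {P P' : C}
    (s : Simulator T C0 P) (s' : Simulator T C0 P') where
  r : P' ⟶ P
  r_functional : GsFunctional r
  proc : Processing 𝒯 P'
  hit : (GSCat.copy P' ▷ C0) ≫ (α_ P' P' C0).hom ≫
      (P' ◁ ((r ▷ C0) ≫ s.s)) ≫ proc.q = s'.s

/- Processing `f` by `q` feeds the program to `q` alongside the output of `f`. Since `q` is
dominated by discarding the program, and discarding a copy of the program gives `f` back by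
counitality, the result is dominated by `f`. Lax reductions compose, so universality of the
codomain pulls back along the reduction part. -/

lemma copy_whiskerLeft_discard {A B X : C} (f : A ⊗ B ⟶ X) :
    (GSCat.copy A ▷ B) ≫ (α_ A A B).hom ≫ (A ◁ f) ≫
      (GSCat.discard A ▷ X) ≫ (λ_ X).hom = f := by
  rw [whisker_exchange_assoc, leftUnitor_naturality,
    ← associator_naturality_left_assoc]
  simp only [leftUnitor_tensor_hom, Category.assoc, Iso.hom_inv_id_assoc,
    ← comp_whiskerRight_assoc, GSCat.copy_counit_left, id_whiskerRight, Category.id_comp]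

lemma GsFunctional.comp {A B D : C} {f : A ⟶ B} {g : B ⟶ D}
    (hf : GsFunctional f) (hg : GsFunctional g) : GsFunctional (f ≫ g) := by
  unfold GsFunctional at *
  rw [Category.assoc, hg, reassoc_of% hf, tensorHom_comp_tensorHom]

namespace TCC

variable {T C0 : C} (𝒯 : TCC C T C0)

lemma amb_processing {P : C} (p : Processing 𝒯 P) (f : P ⊗ C0 ⟶ T ⊗ C0) :
    𝒯.amb f ((GSCat.copy P ▷ C0) ≫ (α_ P P C0).hom ≫ (P ◁ f) ≫ p.q) := by
  have h := 𝒯.amb_precomp ((GSCat.copy P ▷ C0) ≫ (α_ P P C0).hom ≫ (P ◁ f)) p.weak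
  simpa only [Category.assoc, copy_whiskerLeft_discard] using h

lemma amb_reduction_of_simMor {P P' : C} {s : Simulator T C0 P} {s' : Simulator T C0 P'}
    (m : SimMor 𝒯 s s') : 𝒯.amb ((m.r ▷ C0) ≫ s.s) s'.s :=
  m.hit ▸ 𝒯.amb_processing m.proc _

lemma isUniversal_of_lax_reduction {P P' : C} {s : Simulator T C0 P}
    {s' : Simulator T C0 P'} {r : P' ⟶ P} (hr : GsFunctional r)
    (hlax : 𝒯.amb ((r ▷ C0) ≫ s.s) s'.s) (hs' : IsUniversal 𝒯 s') : IsUniversal 𝒯 s := by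
  obtain ⟨r', hr'_functional, hr'_lax⟩ := hs'
  refine ⟨r' ≫ r, hr'_functional.comp hr, ?_⟩
  have h := 𝒯.amb_precomp (r' ▷ C0) hlax
  rw [← Category.assoc, ← comp_whiskerRight] at h
  exact 𝒯.amb_trans h hr'_lax

end TCC

/-- The reduction part of a simulator morphism is a lax reduction, i.e.
`s ∘ (r ⊗ id) ⪰ s'`; consequently simulator morphisms cannot generate universality. -/
theorem simMor_gives_lax_reduction {T C0 : C} (𝒯 : TCC C T C0) {P P' : C}
    (s : Simulator T C0 P) (s' : Simulator T C0 P') (m : SimMor 𝒯 s s') :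
    𝒯.amb ((m.r ▷ C0) ≫ s.s) s'.s ∧ (IsUniversal 𝒯 s' → IsUniversal 𝒯 s) :=
  ⟨𝒯.amb_reduction_of_simMor m,
    𝒯.isUniversal_of_lax_reduction m.r_functional (𝒯.amb_reduction_of_simMor m)⟩
end

section
/- (Necessary condition for parsimony.) Let (C,T,C₀,⪰) be a target–context category and s : P⊗C₀ → T⊗C₀ a simulator such that every lax reduction r* : s → id is also an oplax reduction (i.e. s∘(r⊗id_{C₀}) ⪰ id_{T⊗C₀} implies id_{T⊗C₀} ⪰ s∘(r⊗id_{C₀})). If s is a compressed universal simulator, then there exists no simulator morphism of type s → id; i.e. the trivial simulator is not more parsimonious than s. -/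
open CategoryTheory MonoidalCategory

universe w v u v' u'

variable {C : Type u} [Category.{v} C] [MonoidalCategory C] [SymmetricCategory C] [GSCat C]

/-!
Let `(r, q) : s → id` be a simulator morphism. Discarding the program input of `q` turns the
equation `q ∘ (id ⊗ r*s) ∘ (Δ ⊗ id) = id` into `r*s ⪰ id`, so `r` is a lax reduction, hence
also oplax, and compressedness yields functional `t, g` with `s_T r t = s_T r g` such that
`g` does not oplax context-reduce to `t`. Evaluating the same equation at the program `g`
shows that the target marginal of `q`, fed with `g` and the compiled `s_T r g`, returns `g`
on the domain of `g`. Since `t` compiles to the same target, the chain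
`t ⊗ id ⪰ dom(g) (t ⊗ id) ⪰ dom(g) r*s(t) ⪰ q(g, r*s(t)) ⪰ (g ⊗ v)(Δ ⊗ id)`
(restriction, oplaxness, the bound on `q`, restriction) is a context reduction of `g` to `t`.
-/

namespace GSCat

def pair {Z A B : C} (f : Z ⟶ A) (h : Z ⟶ B) : Z ⟶ A ⊗ B := copy Z ≫ (f ⊗ₘ h)

theorem copy_comp_discard_whiskerRight (A : C) : copy A ≫ (discard A ▷ A) = (λ_ A).inv := by
  rw [← Iso.comp_hom_eq_id, Category.assoc, copy_counit_left]

theorem gsDom_toUnit {Z : C} (z : Z ⟶ 𝟙_ C) :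
    gsDom z = copy Z ≫ (Z ◁ z) ≫ (ρ_ Z).hom := by
  rw [gsDom, discard_unit, Category.comp_id]

theorem gsDom_comp_discard {Z X : C} (f : Z ⟶ X) : gsDom (f ≫ discard X) = gsDom f := by
  rw [gsDom_toUnit, gsDom]

theorem gsDom_discard (Z : C) : gsDom (discard Z) = 𝟙 Z := by
  rw [gsDom_toUnit, copy_counit_right]

theorem gsDom_eq_of_gsTotal {Z X : C} {f : Z ⟶ X} (hf : GsTotal f) : gsDom f = 𝟙 Z := by
  rw [← gsDom_comp_discard, hf, gsDom_discard]

theorem pair_comp_tensorHom {Z A B A' B' : C} (f : Z ⟶ A) (h : Z ⟶ B) (u : A ⟶ A')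
    (v : B ⟶ B') :
    pair f h ≫ (u ⊗ₘ v) = pair (f ≫ u) (h ≫ v) := by
  simp [pair]

theorem pair_whiskerRight {Z A B A' : C} (f : Z ⟶ A) (h : Z ⟶ B) (u : A ⟶ A') :
    pair f h ≫ (u ▷ B) = pair (f ≫ u) h := by
  rw [pair, Category.assoc, tensorHom_comp_whiskerRight, pair]

theorem pair_whiskerLeft {Z A B B' : C} (f : Z ⟶ A) (h : Z ⟶ B) (v : B ⟶ B') :
    pair f h ≫ (A ◁ v) = pair f (h ≫ v) := by
  rw [pair, Category.assoc, tensorHom_comp_whiskerLeft, pair]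

theorem pair_braiding {Z A B : C} (f : Z ⟶ A) (h : Z ⟶ B) :
    pair f h ≫ (β_ A B).hom = pair h f := by
  rw [pair, Category.assoc, BraidedCategory.braiding_naturality, ← Category.assoc, copy_comm,
    pair]

theorem pair_rightUnitor {Z A : C} (f : Z ⟶ A) (z : Z ⟶ 𝟙_ C) :
    pair f z ≫ (ρ_ A).hom = gsDom z ≫ f := by
  rw [gsDom_toUnit, pair, tensorHom_def', Category.assoc, Category.assoc,
    rightUnitor_naturality, Category.assoc, Category.assoc]

theorem pair_leftUnitor {Z B : C} (z : Z ⟶ 𝟙_ C) (f : Z ⟶ B) :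
    pair z f ≫ (λ_ B).hom = gsDom z ≫ f := by
  rw [← braiding_rightUnitor, ← Category.assoc, pair_braiding, pair_rightUnitor]

theorem gsDom_comp_discard_eq_comp_discard {Z X : C} (f : Z ⟶ X) :
    gsDom f ≫ discard Z = f ≫ discard X := by
  rw [← gsDom_comp_discard, ← pair_rightUnitor, ← unitors_equal, pair_leftUnitor,
    gsDom_discard, Category.id_comp]

theorem pair_discard {Z A B : C} (f : Z ⟶ A) (h : Z ⟶ B) :
    pair f h ≫ discard (A ⊗ B) = gsDom f ≫ h ≫ discard B := by
  rw [discard_tensor, ← Category.assoc, pair_comp_tensorHom, pair_leftUnitor,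
    gsDom_comp_discard]

theorem pair_assoc {Z A B D : C} (f : Z ⟶ A) (h : Z ⟶ B) (k : Z ⟶ D) :
    pair (pair f h) k ≫ (α_ A B D).hom = pair f (pair h k) := by
  have hcoassoc : copy Z ≫ (copy Z ⊗ₘ 𝟙 Z) ≫ (α_ Z Z Z).hom
      = copy Z ≫ (𝟙 Z ⊗ₘ copy Z) := by
    rw [tensorHom_id, id_tensorHom, copy_assoc]
  calc pair (pair f h) k ≫ (α_ A B D).hom
      = (copy Z ≫ (copy Z ⊗ₘ 𝟙 Z) ≫ (α_ Z Z Z).hom) ≫ (f ⊗ₘ h ⊗ₘ k) := by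
        simp only [pair, Category.assoc, ← associator_naturality, tensorHom_comp_tensorHom_assoc,
          Category.id_comp]
    _ = pair f (pair h k) := by
        rw [hcoassoc]; simp only [pair, Category.assoc, tensorHom_comp_tensorHom, Category.id_comp]

theorem pair_assoc_inv {Z A B D : C} (f : Z ⟶ A) (h : Z ⟶ B) (k : Z ⟶ D) :
    pair f (pair h k) ≫ (α_ A B D).inv = pair (pair f h) k := by
  rw [← pair_assoc, Category.assoc, Iso.hom_inv_id, Category.comp_id]

theorem gsDom_eq_pair {Z X : C} (f : Z ⟶ X) :
    gsDom f = pair (f ≫ discard X) (𝟙 Z) ≫ (λ_ Z).hom := by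
  rw [pair_leftUnitor, gsDom_comp_discard, Category.comp_id]

theorem copy_comp_gsDom_whiskerRight {Z X : C} (f : Z ⟶ X) :
    copy Z ≫ (gsDom f ▷ Z) = gsDom f ≫ copy Z := by
  calc copy Z ≫ (gsDom f ▷ Z)
      = pair (f ≫ discard X) (pair (𝟙 Z) (𝟙 Z)) ≫ (α_ _ Z Z).inv ≫
          ((λ_ Z).hom ▷ Z) := by
        rw [← Category.assoc, pair_assoc_inv, pair_whiskerRight, ← gsDom_eq_pair, pair,
          tensorHom_id]
    _ = gsDom f ≫ copy Z := by
        rw [← leftUnitor_tensor_hom, pair_leftUnitor, gsDom_comp_discard, pair,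
          id_tensorHom_id, Category.comp_id]

theorem gsDom_comp_pair_left {Z X A B : C} (z : Z ⟶ X) (f : Z ⟶ A) (h : Z ⟶ B) :
    gsDom z ≫ pair f h = pair (gsDom z ≫ f) h := by
  rw [pair, ← Category.assoc, ← copy_comp_gsDom_whiskerRight, pair, Category.assoc,
    whiskerRight_comp_tensorHom]

theorem gsDom_comp_pair_right {Z X A B : C} (z : Z ⟶ X) (f : Z ⟶ A) (h : Z ⟶ B) :
    gsDom z ≫ pair f h = pair f (gsDom z ≫ h) := by
  rw [← pair_braiding h f, ← Category.assoc, gsDom_comp_pair_left, pair_braiding]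

theorem gsDom_gsDom_comp {Z X Y : C} (f : Z ⟶ X) (g : Z ⟶ Y) :
    gsDom (gsDom f ≫ g) = gsDom f ≫ gsDom g := by
  rw [gsDom_eq_pair (gsDom f ≫ g), gsDom_eq_pair g, Category.assoc, ← gsDom_comp_pair_left,
    Category.assoc]

theorem gsDom_comm {Z X Y : C} (f : Z ⟶ X) (g : Z ⟶ Y) :
    gsDom f ≫ gsDom g = gsDom g ≫ gsDom f := by
  have h : gsDom f ≫ g ≫ discard Y = gsDom g ≫ f ≫ discard X := by
    rw [← gsDom_comp_discard f, ← pair_leftUnitor, ← gsDom_comp_discard g,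
      ← pair_rightUnitor, unitors_equal]
  rw [← gsDom_gsDom_comp, ← gsDom_comp_discard, Category.assoc, h, ← Category.assoc,
    gsDom_comp_discard, gsDom_gsDom_comp]

theorem gsDom_pair {Z A B : C} (f : Z ⟶ A) (h : Z ⟶ B) :
    gsDom (pair f h) = gsDom f ≫ gsDom h := by
  rw [← gsDom_comp_discard, pair_discard, ← gsDom_gsDom_comp, ← Category.assoc,
    gsDom_comp_discard]

def fst (A B : C) : A ⊗ B ⟶ A := (A ◁ discard B) ≫ (ρ_ A).hom

def snd (A B : C) : A ⊗ B ⟶ B := (discard A ▷ B) ≫ (λ_ B).hom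

theorem gsTotal_fst (A X : C) : GsTotal (fst A X) := by
  rw [GsTotal, discard_tensor, fst, Category.assoc, ← rightUnitor_naturality, ← Category.assoc,
    ← tensorHom_def', unitors_equal]

theorem gsTotal_snd (A X : C) : GsTotal (snd A X) := by
  rw [GsTotal, discard_tensor, snd, Category.assoc, ← leftUnitor_naturality, ← Category.assoc,
    ← MonoidalCategory.tensorHom_def]

theorem pair_comp_fst {Z A B : C} (f : Z ⟶ A) (h : Z ⟶ B) :
    pair f h ≫ fst A B = gsDom h ≫ f := by
  rw [fst, ← Category.assoc, pair_whiskerLeft, pair_rightUnitor, gsDom_comp_discard]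

theorem pair_comp_snd {Z A B : C} (f : Z ⟶ A) (h : Z ⟶ B) :
    pair f h ≫ snd A B = gsDom f ≫ h := by
  rw [snd, ← Category.assoc, pair_whiskerRight, pair_leftUnitor, gsDom_comp_discard]

theorem GsFunctional.comp_copy {A X : C} {f : A ⟶ X} (hf : GsFunctional f) :
    f ≫ copy X = pair f f := hf

theorem GsFunctional.comp {A B D : C} {f : A ⟶ B} {g : B ⟶ D}
    (hf : GsFunctional f) (hg : GsFunctional g) : GsFunctional (f ≫ g) := by
  rw [GsFunctional, Category.assoc, hg, ← Category.assoc, hf, Category.assoc,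
    tensorHom_comp_tensorHom]

theorem pair_pair_comp_tensorμ {Z A₁ A₂ B₁ B₂ : C} (f₁ : Z ⟶ A₁) (f₂ : Z ⟶ A₂)
    (h₁ : Z ⟶ B₁) (h₂ : Z ⟶ B₂) :
    pair (pair f₁ f₂) (pair h₁ h₂) ≫ tensorμ A₁ A₂ B₁ B₂
      = pair (pair f₁ h₁) (pair f₂ h₂) := by
  simp only [tensorμ, ← Category.assoc]
  rw [pair_assoc, pair_whiskerLeft, pair_assoc_inv, pair_whiskerLeft, pair_whiskerRight,
    pair_braiding, pair_whiskerLeft, pair_assoc, pair_assoc_inv]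

theorem GsFunctional.pair {Z A B : C} {f : Z ⟶ A} {h : Z ⟶ B}
    (hf : GsFunctional f) (hh : GsFunctional h) : GsFunctional (pair f h) := by
  rw [GsFunctional, copy_tensor, ← Category.assoc, pair_comp_tensorHom, GsFunctional.comp_copy hf,
    GsFunctional.comp_copy hh, pair_pair_comp_tensorμ]
  rfl

section Normalized

variable [GsNormalizedCat C]

theorem gsDom_comp_self {A X : C} (f : A ⟶ X) : gsDom f ≫ f = f := GsNormalizedCat.norm f

theorem gsRestrict_gsDom_comp {Z X Y : C} (z : Z ⟶ X) (f : Z ⟶ Y) :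
    GsRestrict f (gsDom z ≫ f) := by
  rw [GsRestrict, gsDom_gsDom_comp, Category.assoc, gsDom_comp_self]

theorem gsDom_comp_eq_of_pair_eq {Z A B : C} {P G : Z ⟶ A} {Q H : Z ⟶ B}
    (heq : pair P Q = pair G H) (hH : GsTotal H) : gsDom G ≫ P = G := by
  have hfst : gsDom Q ≫ P = G := by
    rw [← pair_comp_fst, heq, pair_comp_fst, gsDom_eq_of_gsTotal hH, Category.id_comp]
  have hdiscard : gsDom P ≫ Q ≫ discard B = G ≫ discard A := by
    rw [← pair_discard, heq, pair_discard, hH, gsDom_comp_discard_eq_comp_discard]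
  rw [← gsDom_comp_discard G, ← hdiscard, ← Category.assoc, gsDom_comp_discard,
    gsDom_gsDom_comp, gsDom_comm, Category.assoc, gsDom_comp_self, hfst]

theorem gsRestrict_pair_of_gsDom_comp {Z A B : C} {P G : Z ⟶ A} (R : Z ⟶ B)
    (h : gsDom G ≫ P = G) : GsRestrict (pair P R) (pair G R) := by
  rw [GsRestrict, gsDom_pair, Category.assoc, gsDom_comp_pair_right, gsDom_comp_self,
    gsDom_comp_pair_left, h]

end Normalized

theorem copy_tensor_comp_fst_whiskerRight (A X : C) :
    copy (A ⊗ X) ≫ (fst A X ▷ (A ⊗ X)) = (copy A ▷ X) ≫ (α_ A A X).hom := by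
  have hnat : tensorμ A A X X ≫ ((A ◁ discard X) ▷ (A ⊗ X))
      = ((A ⊗ A) ◁ (discard X ▷ X)) ≫ tensorμ A A (𝟙_ C) X := by
    simpa only [id_tensorHom, tensorHom_id, id_whiskerRight] using
      (tensorμ_natural (𝟙 A) (𝟙 A) (discard X) (𝟙 X)).symm
  have hcounit :
      (copy A ⊗ₘ copy X) ≫ ((A ⊗ A) ◁ (discard X ▷ X)) = copy A ⊗ₘ (λ_ X).inv := by
    rw [tensorHom_comp_whiskerLeft, copy_comp_discard_whiskerRight]
  rw [copy_tensor, fst, comp_whiskerRight, Category.assoc, reassoc_of% hnat,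
    reassoc_of% hcounit, MonoidalCategory.tensorHom_def]
  simp only [tensorμ, braiding_tensorUnit_right]
  monoidal

variable {C0 : C}

def ctxPair {A X Y : C} (f : A ⟶ X) (h : A ⊗ C0 ⟶ Y) : A ⊗ C0 ⟶ X ⊗ Y :=
  (copy A ▷ C0) ≫ (α_ A A C0).hom ≫ (f ⊗ₘ h)

theorem ctxPair_eq_pair {A X Y : C} (f : A ⟶ X) (h : A ⊗ C0 ⟶ Y) :
    ctxPair f h = pair (fst A C0 ≫ f) h := by
  rw [ctxPair, ← reassoc_of% copy_tensor_comp_fst_whiskerRight, whiskerRight_comp_tensorHom,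
    pair]

theorem whiskerRight_eq_ctxPair {A X : C} (f : A ⟶ X) : f ▷ C0 = ctxPair f (snd A C0) := by
  calc f ▷ C0 = ((copy A ≫ (A ◁ discard A) ≫ (ρ_ A).hom) ▷ C0) ≫ (f ▷ C0) := by
        rw [copy_counit_right, id_whiskerRight, Category.id_comp]
    _ = ctxPair f (snd A C0) := by
        rw [ctxPair, snd, tensorHom_def']
        monoidal

theorem ctxPair_comp_snd {A X Y : C} (f : A ⟶ X) (h : A ⊗ C0 ⟶ Y) :
    ctxPair f h ≫ snd X Y = gsDom (fst A C0 ≫ f) ≫ h := by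
  rw [ctxPair_eq_pair, pair_comp_snd]

theorem copy_whiskerRight_coassoc (A : C) :
    (copy A ▷ C0) ≫ (α_ A A C0).hom ≫ (copy A ▷ (A ⊗ C0)) ≫ (α_ A A (A ⊗ C0)).hom
      = (copy A ▷ C0) ≫ (α_ A A C0).hom ≫
          (A ◁ ((copy A ▷ C0) ≫ (α_ A A C0).hom)) := by
  calc _ = ((copy A ≫ (copy A ▷ A) ≫ (α_ A A A).hom) ▷ C0) ≫ (α_ A (A ⊗ A) C0).hom ≫
        (A ◁ (α_ A A C0).hom) := by monoidal
    _ = _ := by rw [copy_assoc]; monoidal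

theorem ctxPair_comp_ctxPair {A X Z W : C} {x : A ⟶ X} (hx : GsFunctional x)
    (b : A ⊗ C0 ⟶ C0) (f : X ⟶ Z) (h : X ⊗ C0 ⟶ W) :
    ctxPair x b ≫ ctxPair f h = ctxPair (x ≫ f) (ctxPair x b ≫ h) := by
  have hcopy : (x ⊗ₘ b) ≫ (copy X ▷ C0) ≫ (α_ X X C0).hom
      = (copy A ▷ (A ⊗ C0)) ≫ (α_ A A (A ⊗ C0)).hom ≫ (x ⊗ₘ (x ⊗ₘ b)) := by
    rw [tensorHom_comp_whiskerRight_assoc, hx, ← whiskerRight_comp_tensorHom_assoc,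
      associator_naturality]
  calc ctxPair x b ≫ ctxPair f h
      = (copy A ▷ C0) ≫ (α_ A A C0).hom ≫ (copy A ▷ (A ⊗ C0)) ≫
          (α_ A A (A ⊗ C0)).hom ≫ ((x ≫ f) ⊗ₘ ((x ⊗ₘ b) ≫ h)) := by
        rw [ctxPair, ctxPair, Category.assoc, Category.assoc, reassoc_of% hcopy,
          tensorHom_comp_tensorHom]
    _ = ctxPair (x ≫ f) (ctxPair x b ≫ h) := by
        rw [reassoc_of% copy_whiskerRight_coassoc, ctxPair, ctxPair, whiskerLeft_comp_tensorHom]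
        simp only [Category.assoc]

theorem whiskerRight_comp_ctxPair {A X Z W : C} {x : A ⟶ X} (hx : GsFunctional x)
    (f : X ⟶ Z) (h : X ⊗ C0 ⟶ W) :
    (x ▷ C0) ≫ ctxPair f h = ctxPair (x ≫ f) ((x ▷ C0) ≫ h) := by
  rw [whiskerRight_eq_ctxPair x, ctxPair_comp_ctxPair hx]

theorem ctxPair_ctxPair_assoc {A X Y Z : C} (g : A ⟶ X) (a : A ⟶ Y) (b : A ⊗ C0 ⟶ Z) :
    ctxPair g (ctxPair a b) ≫ (α_ X Y Z).inv = ctxPair (pair g a) b := by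
  calc ctxPair g (ctxPair a b) ≫ (α_ X Y Z).inv
      = (copy A ▷ C0) ≫ (α_ A A C0).hom ≫ (A ◁ ((copy A ▷ C0) ≫ (α_ A A C0).hom)) ≫
          (g ⊗ₘ (a ⊗ₘ b)) ≫ (α_ X Y Z).inv := by
        rw [ctxPair, ctxPair, whiskerLeft_comp_tensorHom_assoc]
        simp only [Category.assoc]
    _ = ctxPair (pair g a) b := by
        rw [← reassoc_of% copy_whiskerRight_coassoc, associator_inv_naturality,
          Iso.hom_inv_id_assoc, ctxPair, pair, whiskerRight_comp_tensorHom]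

end GSCat

open GSCat

variable {T C0 : C}

theorem Simulator.whiskerRight_comp_s {P A : C} (s : Simulator T C0 P) {x : A ⟶ P}
    (hx : GsFunctional x) : (x ▷ C0) ≫ s.s = ctxPair (x ≫ s.sT) ((x ▷ C0) ≫ s.sC) := by
  rw [s.split]
  exact whiskerRight_comp_ctxPair hx s.sT s.sC

theorem Processing.ctxPair_comp_q {𝒯 : TCC C T C0} {P A : C} (p : Processing 𝒯 P)
    {g : A ⟶ P} {a : A ⟶ T} (hg : GsFunctional g) (ha : GsFunctional a) (b : A ⊗ C0 ⟶ C0) :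
    ctxPair g (ctxPair a b) ≫ p.q
      = ctxPair (pair g a ≫ p.qT) (ctxPair (pair g a) b ≫ p.qC) := by
  have hq : p.q = (α_ P T C0).inv ≫ ctxPair p.qT p.qC := p.split
  rw [hq, ← Category.assoc, ctxPair_ctxPair_assoc, ctxPair_comp_ctxPair (hg.pair ha)]

namespace SimMor

variable {𝒯 : TCC C T C0} {P P' : C} {s : Simulator T C0 P} {s' : Simulator T C0 P'}

theorem ctxPair_comp_q (m : SimMor 𝒯 s s') :
    ctxPair (𝟙 P') ((m.r ▷ C0) ≫ s.s) ≫ m.proc.q = s'.s := by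
  rw [ctxPair, id_tensorHom]
  simpa only [Category.assoc] using m.hit

theorem amb_pullback (m : SimMor 𝒯 s s') : 𝒯.amb ((m.r ▷ C0) ≫ s.s) s'.s := by
  have h := 𝒯.amb_precomp (ctxPair (𝟙 P') ((m.r ▷ C0) ≫ s.s)) m.proc.weak
  rwa [← snd, ctxPair_comp_snd, Category.comp_id, gsDom_eq_of_gsTotal (gsTotal_fst P' C0),
    Category.id_comp, ctxPair_comp_q] at h

theorem ctxPair_whiskerRight_comp_q (m : SimMor 𝒯 s s') {A : C} {g x : A ⟶ P'}
    (hg : GsFunctional g) (hx : GsFunctional x) :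
    ctxPair g ((x ▷ C0) ≫ (m.r ▷ C0) ≫ s.s) ≫ m.proc.q
      = ctxPair (pair g (x ≫ m.r ≫ s.sT) ≫ m.proc.qT)
          (ctxPair (pair g (x ≫ m.r ≫ s.sT)) (((x ≫ m.r) ▷ C0) ≫ s.sC) ≫
            m.proc.qC) := by
  have hxr := hx.comp m.r_functional
  have hxrs : GsFunctional (x ≫ m.r ≫ s.sT) := hx.comp (m.r_functional.comp s.sT_functional)
  rw [← comp_whiskerRight_assoc, s.whiskerRight_comp_s hxr, Category.assoc x,
    m.proc.ctxPair_comp_q hg hxrs]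

theorem ctxPair_whiskerRight_self_comp_q (m : SimMor 𝒯 s s') {A : C} {g : A ⟶ P'}
    (hg : GsFunctional g) :
    ctxPair g ((g ▷ C0) ≫ (m.r ▷ C0) ≫ s.s) ≫ m.proc.q = (g ▷ C0) ≫ s'.s := by
  rw [← m.ctxPair_comp_q, reassoc_of% whiskerRight_comp_ctxPair hg, Category.comp_id]

variable [GsNormalizedCat C] {triv : Simulator T C0 T}

theorem gsDom_comp_qT (m : SimMor 𝒯 s triv) (htriv : triv.s = 𝟙 (T ⊗ C0)) {A : C}
    {g : A ⟶ T} (hg : GsFunctional g) :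
    gsDom (fst A C0 ≫ g) ≫ fst A C0 ≫ pair g (g ≫ m.r ≫ s.sT) ≫ m.proc.qT
      = fst A C0 ≫ g := by
  have h := m.ctxPair_whiskerRight_self_comp_q hg
  rw [m.ctxPair_whiskerRight_comp_q hg hg, htriv, Category.comp_id, whiskerRight_eq_ctxPair g,
    ctxPair_eq_pair (_ ≫ m.proc.qT), ctxPair_eq_pair g] at h
  exact gsDom_comp_eq_of_pair_eq h (gsTotal_snd A C0)

theorem exists_amb_ctxPair (m : SimMor 𝒯 s triv) (htriv : triv.s = 𝟙 (T ⊗ C0))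
    (hoplax : 𝒯.amb (𝟙 (T ⊗ C0)) ((m.r ▷ C0) ≫ s.s)) {A : C} {t g : A ⟶ T}
    (ht : GsFunctional t) (hg : GsFunctional g) (hcomp : t ≫ m.r ≫ s.sT = g ≫ m.r ≫ s.sT) :
    ∃ v : A ⊗ C0 ⟶ C0, 𝒯.amb (t ▷ C0) (ctxPair g v) := by
  set D := gsDom (fst A C0 ≫ g)
  set E := pair g (g ≫ m.r ≫ s.sT)
  set v := ctxPair E (((t ≫ m.r) ▷ C0) ≫ s.sC) ≫ m.proc.qC
  have hdom : 𝒯.amb (t ▷ C0) (D ≫ (t ▷ C0)) :=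
    𝒯.amb_of_restrict (gsRestrict_gsDom_comp _ _)
  have hsim : 𝒯.amb (D ≫ (t ▷ C0)) (D ≫ (t ▷ C0) ≫ (m.r ▷ C0) ≫ s.s) := by
    simpa only [Category.comp_id, Category.assoc] using 𝒯.amb_precomp (D ≫ (t ▷ C0)) hoplax
  have hproc :
      𝒯.amb (D ≫ (t ▷ C0) ≫ (m.r ▷ C0) ≫ s.s) (ctxPair (E ≫ m.proc.qT) v) := by
    have h := 𝒯.amb_precomp (ctxPair g ((t ▷ C0) ≫ (m.r ▷ C0) ≫ s.s)) m.proc.weak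
    rwa [← snd, ctxPair_comp_snd, m.ctxPair_whiskerRight_comp_q hg ht, hcomp] at h
  have hrestrict : GsRestrict (ctxPair (E ≫ m.proc.qT) v) (ctxPair g v) := by
    rw [ctxPair_eq_pair, ctxPair_eq_pair]
    exact gsRestrict_pair_of_gsDom_comp v (m.gsDom_comp_qT htriv hg)
  exact ⟨v, 𝒯.amb_trans hdom <| 𝒯.amb_trans hsim <|
    𝒯.amb_trans hproc (𝒯.amb_of_restrict hrestrict)⟩

end SimMor

theorem parsimony_necessary_general [GsNormalizedCat C] {T C0 : C} (𝒯 : TCC C T C0) {P : C}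
    (s : Simulator T C0 P)
    (hoplax : ∀ r : T ⟶ P, GsFunctional r →
      𝒯.amb ((r ▷ C0) ≫ s.s) (𝟙 (T ⊗ C0)) → 𝒯.amb (𝟙 (T ⊗ C0)) ((r ▷ C0) ≫ s.s))
    (hcompressed : ∀ r : T ⟶ P, GsFunctional r →
      𝒯.amb ((r ▷ C0) ≫ s.s) (𝟙 (T ⊗ C0)) →
      ∃ t g : 𝟙_ C ⟶ T, GsFunctional t ∧ GsFunctional g ∧
        t ≫ r ≫ s.sT = g ≫ r ≫ s.sT ∧
        ¬ ∃ v : 𝟙_ C ⊗ C0 ⟶ C0,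
          𝒯.amb (t ▷ C0)
            ((GSCat.copy (𝟙_ C) ▷ C0) ≫ (α_ (𝟙_ C) (𝟙_ C) C0).hom ≫ (g ⊗ₘ v))) :
    ∀ triv : Simulator T C0 T, triv.s = 𝟙 (T ⊗ C0) → IsEmpty (SimMor 𝒯 s triv) := by
  intro triv htriv
  refine ⟨fun m => ?_⟩
  have hlax : 𝒯.amb ((m.r ▷ C0) ≫ s.s) (𝟙 (T ⊗ C0)) := htriv ▸ m.amb_pullback
  obtain ⟨t, g, ht, hg, hcomp, hnot⟩ := hcompressed m.r m.r_functional hlax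
  exact hnot (m.exists_amb_ctxPair htriv (hoplax m.r m.r_functional hlax) ht hg hcomp)

/-- Necessary condition for parsimony: if every lax reduction `r* : s → id`
is also oplax, and `s` is a compressed universal simulator (for every lax reduction `r`
there are functional states `t, g : I ⟶ T` compiled to the same target, i.e.
`s_T ∘ r ∘ t = s_T ∘ r ∘ g`, such that `g` does not oplax context-reduce to `t`),
then there is no simulator morphism from `s` to the trivial simulator. -/
theorem parsimony_necessary [GsNormalizedCat C] {T C0 : C} (𝒯 : TCC C T C0) {P : C}
    (s : Simulator T C0 P)
    (hoplax : ∀ r : T ⟶ P, GsFunctional r →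
      𝒯.amb ((r ▷ C0) ≫ s.s) (𝟙 (T ⊗ C0)) → 𝒯.amb (𝟙 (T ⊗ C0)) ((r ▷ C0) ≫ s.s))
    (huniv : IsUniversal 𝒯 s)
    (hcompressed : ∀ r : T ⟶ P, GsFunctional r →
      𝒯.amb ((r ▷ C0) ≫ s.s) (𝟙 (T ⊗ C0)) →
      ∃ t g : 𝟙_ C ⟶ T, GsFunctional t ∧ GsFunctional g ∧
        t ≫ r ≫ s.sT = g ≫ r ≫ s.sT ∧
        ¬ ∃ v : 𝟙_ C ⊗ C0 ⟶ C0,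
          𝒯.amb (t ▷ C0)
            ((GSCat.copy (𝟙_ C) ▷ C0) ≫ (α_ (𝟙_ C) (𝟙_ C) C0).hom ≫ (g ⊗ₘ v))) :
    ∀ triv : Simulator T C0 T, triv.s = 𝟙 (T ⊗ C0) → IsEmpty (SimMor 𝒯 s triv) :=
  parsimony_necessary_general 𝒯 s hoplax hcompressed
end
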